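/- arXiv:2502.09832 — 3 statements merged into one kernel-verified Lean document; each statement's English description precedes it below -/
import Mathlib

section
/- Let k ≥ 1 and let σ_0, σ_1, ..., σ_l be random variables where σ_1, ..., σ_{l-1} are i.i.d. uniform on {1,...,k}, independent of σ_0 and σ_l. Define ω(x,y) = k-1 if x = y and ω(x,y) = -1 otherwise. Then for any real numbers a, b, the conditional expectation E[∏_{i=1}^{l} (a + b·ω(σ_{i-1}, σ_i)) | σ_0, σ_l] equals a^l + b^l · ω(σ_0, σ_l). -/
/-!
The sum over paths with fixed endpoints is the `(x, y)` entry of `W ^ l` for the weight matrix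
`W = a • J + b • Ω`, where `J` is the all-ones matrix and `Ω = k • 1 - J` has entries `ω`.
Since `J * Ω = Ω * J = 0`, `J * J = k • J` and `Ω * Ω = k • Ω`, the two summands behave like
orthogonal idempotents up to the factor `k`, so `W ^ l = k ^ (l - 1) • (a ^ l • J + b ^ l • Ω)`.
-/

open Finset
open Fin.NatCast

/-- `ω(x,y) = k-1` if `x = y` and `-1` otherwise. -/
def omega (k : ℕ) (x y : Fin k) : ℝ := if x = y then (k : ℝ) - 1 else -1

theorem pow_succ_smul_add_smul {R A : Type*} [CommSemiring R] [Semiring A] [Algebra R A]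
    {P Q : A} {c : R} (hPQ : P * Q = 0) (hQP : Q * P = 0) (hP : P * P = c • P)
    (hQ : Q * Q = c • Q) (a b : R) (n : ℕ) :
    (a • P + b • Q) ^ (n + 1) = c ^ n • (a ^ (n + 1) • P + b ^ (n + 1) • Q) := by
  induction n with
  | zero => simp
  | succ n ih =>
    rw [pow_succ, ih]
    simp only [smul_mul_assoc, mul_smul_comm, add_mul, mul_add, smul_add, hPQ, hQP, hP, hQ,
      smul_zero, add_zero, zero_add, smul_smul]
    congr 1 <;> congr 1 <;> ring

theorem Fin.prod_range_natCast_succ {M : Type*} [CommMonoid M] (l : ℕ)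
    (f : Fin (l + 1) → Fin (l + 1) → M) :
    ∏ i ∈ range l, f i ↑(i + 1) = ∏ i : Fin l, f i.castSucc i.succ := by
  rw [prod_range (fun i => f i ↑(i + 1))]
  refine prod_congr rfl fun i _ => ?_
  rw [Fin.coe_eq_castSucc, ← Fin.val_succ, Fin.cast_val_eq_self]

namespace Matrix

variable {n R : Type*} [Fintype n]

theorem sum_paths_eq_pow_apply [DecidableEq n] [CommSemiring R] (M : Matrix n n R) (l : ℕ)
    (x y : n) :
    ∑ σ ∈ univ.filter (fun σ : Fin (l + 1) → n => σ 0 = x ∧ σ (Fin.last l) = y),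
      ∏ i : Fin l, M (σ i.castSucc) (σ i.succ) = (M ^ l) x y := by
  induction l generalizing x with
  | zero =>
    simp only [pow_zero, one_apply, Fin.prod_univ_zero, sum_filter]
    refine (Fintype.sum_equiv (Equiv.funUnique (Fin 1) n) _
      (fun z => if z = x then if z = y then 1 else 0 else 0) fun σ => ite_and ..).trans ?_
    simp
  | succ l ih =>
    calc _ = ∑ τ ∈ univ.filter (fun τ : Fin (l + 1) → n => τ (Fin.last l) = y),
          M x (τ 0) * ∏ i : Fin l, M (τ i.castSucc) (τ i.succ) := by
          refine sum_nbij' Fin.tail (fun τ => Fin.cons x τ) ?_ ?_ ?_ ?_ ?_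
          · intro σ hσ
            simp only [mem_filter, mem_univ, true_and] at hσ ⊢
            simpa [Fin.tail, ← Fin.succ_last] using hσ.2
          · intro τ hτ
            simp only [mem_filter, mem_univ, true_and] at hτ ⊢
            simpa [← Fin.succ_last] using hτ
          · intro σ hσ
            simp only [mem_filter, mem_univ, true_and] at hσ
            rw [← hσ.1, Fin.cons_self_tail]
          · intro τ _
            exact Fin.tail_cons _ _
          · intro σ hσ
            simp only [mem_filter, mem_univ, true_and] at hσ
            rw [Fin.prod_univ_succ]
            simp [Fin.tail, hσ.1]
      _ = ∑ z, M x z * (M ^ l) z y := by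
          rw [← sum_fiberwise _ (fun τ : Fin (l + 1) → n => τ 0)]
          refine sum_congr rfl fun z _ => ?_
          rw [← ih, mul_sum, filter_filter]
          refine sum_congr (by ext; simp [and_comm]) fun τ hτ => ?_
          rw [(mem_filter.1 hτ).2.1]
      _ = (M ^ (l + 1)) x y := by rw [pow_succ', mul_apply]

theorem ones_mul_ones [NonAssocSemiring R] :
    (of fun _ _ => 1 : Matrix n n R) * of (fun _ _ => 1) =
      (Fintype.card n : R) • of fun _ _ => 1 := by
  ext; simp [mul_apply]

theorem pow_succ_smul_ones_add_smul_centered [DecidableEq n] [CommRing R] (a b : R) (m : ℕ) :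
    (a • of (fun _ _ => 1) + b • ((Fintype.card n : R) • 1 - of fun _ _ => 1)) ^ (m + 1) =
      (Fintype.card n : R) ^ m • (a ^ (m + 1) • (of fun _ _ => 1 : Matrix n n R) +
        b ^ (m + 1) • ((Fintype.card n : R) • 1 - of fun _ _ => 1)) := by
  refine pow_succ_smul_add_smul ?_ ?_ ?_ ?_ a b m
  all_goals
    simp only [mul_sub, sub_mul, smul_mul_assoc, mul_smul_comm, one_mul, mul_one, ones_mul_ones,
      smul_sub, smul_smul] <;>
    module

end Matrix

theorem omega_eq_apply (k : ℕ) (x y : Fin k) :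
    omega k x y =
      ((Fintype.card (Fin k) : ℝ) • 1 - Matrix.of fun _ _ => 1 : Matrix (Fin k) (Fin k) ℝ) x y := by
  rcases eq_or_ne x y with rfl | hxy
  · simp [omega]
  · simp [omega, hxy]

/-- Conditional expectation of `∏_{i=1}^l (a + b ω(σ_{i-1}, σ_i))` given the endpoints
`σ_0 = x`, `σ_l = y`, where the interior coordinates are i.i.d. uniform on `[k]`,
equals `a^l + b^l ω(x,y)`. -/
theorem path_conditional_expectation (k l : ℕ) (hk : 1 ≤ k) (hl : 1 ≤ l)
    (a b : ℝ) (x y : Fin k) :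
    (1 / (k : ℝ) ^ (l - 1)) *
      ∑ σ ∈ Finset.univ.filter
          (fun σ : Fin (l + 1) → Fin k => σ 0 = x ∧ σ (Fin.last l) = y),
        ∏ i ∈ Finset.range l, (a + b * omega k (σ ↑i) (σ ↑(i + 1)))
      = a ^ l + b ^ l * omega k x y := by
  obtain ⟨m, rfl⟩ : ∃ m, l = m + 1 := ⟨l - 1, by omega⟩
  have hweight : (Matrix.of fun x y => a + b * omega k x y) = a • Matrix.of (fun _ _ => 1) +
      b • ((Fintype.card (Fin k) : ℝ) • 1 - Matrix.of fun _ _ => 1) := by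
    ext x y
    rw [Matrix.add_apply, Matrix.smul_apply, Matrix.smul_apply, ← omega_eq_apply]
    simp
  have hpaths :=
    Matrix.sum_paths_eq_pow_apply (Matrix.of fun x y => a + b * omega k x y) (m + 1) x y
  simp only [Matrix.of_apply] at hpaths
  rw [sum_congr rfl fun σ _ =>
      Fin.prod_range_natCast_succ (m + 1) fun i j => a + b * omega k (σ i) (σ j),
    hpaths, hweight, Matrix.pow_succ_smul_ones_add_smul_centered]
  simp only [Matrix.smul_apply, Matrix.add_apply, ← omega_eq_apply, Matrix.of_apply, smul_eq_mul,
    mul_one]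
  rw [Fintype.card_fin, add_tsub_cancel_right]
  have hk0 : (k : ℝ) ≠ 0 := Nat.cast_ne_zero.2 (by omega)
  field_simp
end

section
/- Let k ≥ 1 and let σ_0, σ_1, ..., σ_l be as above (interior coordinates i.i.d. uniform on [k], independent of endpoints). Define ω(x,y) = k-1 if x=y and -1 otherwise. Then E[∏_{i=1}^{l} ω(σ_{i-1}, σ_i) | σ_0, σ_l] = ω(σ_0, σ_l). -/
/-!
The sum over paths `σ_0 = x, σ_1, …, σ_l = y` of `∏ ω(σ_{i-1}, σ_i)` is the `(x, y)` entry of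
`W ^ l` for the matrix `W = (ω(a, b))_{a,b} = k • 1 - J`, `J` the all-ones matrix. Since
`J * J = k • J`, also `W * W = k • W`, so `W ^ l = k ^ (l - 1) • W` for `l ≥ 1`.
-/

open Finset
open Fin.NatCast

open Matrix

section PathSums

variable {R α : Type*} [CommSemiring R] [Fintype α] [DecidableEq α]

theorem sum_tuple_mul_prod_mul_eq_dotProduct_pow_mulVec (M : Matrix α α R) (l : ℕ)
    (g f : α → R) :
    ∑ σ : Fin (l + 1) → α, g (σ 0) * (∏ i : Fin l, M (σ i.castSucc) (σ i.succ)) *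
      f (σ (Fin.last l)) = g ⬝ᵥ (M ^ l *ᵥ f) := by
  induction l generalizing g with
  | zero =>
    rw [← (Equiv.funUnique (Fin 1) α).symm.sum_comp]
    simp [dotProduct]
  | succ l ih =>
    rw [← (Fin.consEquiv fun _ => α).sum_comp, Fintype.sum_prod_type, Finset.sum_comm,
      pow_succ', ← mulVec_mulVec, dotProduct_mulVec, ← ih]
    refine Finset.sum_congr rfl fun τ _ => ?_
    simp only [Fin.consEquiv_apply, Fin.prod_univ_succ, Fin.castSucc_succ, ← Fin.succ_last,
      Fin.cons_succ, Fin.castSucc_zero, Fin.cons_zero, vecMul, dotProduct, Finset.sum_mul,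
      mul_assoc]

theorem sum_tuple_prod_eq_pow_apply (M : Matrix α α R) (l : ℕ) (x y : α) :
    ∑ σ ∈ univ.filter (fun σ : Fin (l + 1) → α => σ 0 = x ∧ σ (Fin.last l) = y),
      ∏ i : Fin l, M (σ i.castSucc) (σ i.succ) = (M ^ l) x y := by
  have h := sum_tuple_mul_prod_mul_eq_dotProduct_pow_mulVec M l (Pi.single x 1) (Pi.single y 1)
  rw [single_one_dotProduct, mulVec_single_one, col_apply] at h
  rw [Finset.sum_filter, ← h]
  refine Finset.sum_congr rfl fun σ _ => ?_
  simp only [Pi.single_apply]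
  split_ifs <;> simp_all

end PathSums

theorem prod_range_natCast_eq_prod_castSucc_succ {α M : Type*} [CommMonoid M] {n : ℕ}
    (σ : Fin (n + 1) → α) (f : α → α → M) :
    ∏ i ∈ range n, f (σ i) (σ (i + 1 : ℕ)) = ∏ i : Fin n, f (σ i.castSucc) (σ i.succ) := by
  rw [Finset.prod_range fun i => f (σ i) (σ (i + 1 : ℕ))]
  refine Finset.prod_congr rfl fun i _ => ?_
  congr 2 <;> ext <;> simp

theorem pow_succ_eq_smul_of_mul_self_eq_smul {R A : Type*} [CommSemiring R] [Semiring A]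
    [Algebra R A] {a : A} {c : R} (h : a * a = c • a) (n : ℕ) : a ^ (n + 1) = c ^ n • a := by
  induction n with
  | zero => simp
  | succ n ih => rw [pow_succ, ih, smul_mul_assoc, h, smul_smul, pow_succ]

theorem omega_mul_omega (k : ℕ) : of (omega k) * of (omega k) = (k : ℝ) • of (omega k) := by
  ext x y
  have omega_eq : ∀ a b : Fin k, omega k a b = k * (if a = b then 1 else 0) - 1 := by
    intro a b
    unfold omega
    split_ifs <;> simp
  simp only [mul_apply, of_apply, Matrix.smul_apply, smul_eq_mul, omega_eq]
  simp [sub_mul, mul_sub, Finset.sum_sub_distrib, mul_ite, ite_mul]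

theorem path_omega_conditional_expectation_general (k l : ℕ) (hl : 1 ≤ l)
    (x y : Fin k) :
    (1 / (k : ℝ) ^ (l - 1)) *
      ∑ σ ∈ Finset.univ.filter
          (fun σ : Fin (l + 1) → Fin k => σ 0 = x ∧ σ (Fin.last l) = y),
        ∏ i ∈ Finset.range l, omega k (σ ↑i) (σ ↑(i + 1))
      = omega k x y := by
  obtain ⟨m, rfl⟩ := Nat.exists_eq_add_of_le' hl
  have hk : (k : ℝ) ≠ 0 := Nat.cast_ne_zero.mpr (Fin.pos x).ne'
  have hpath := sum_tuple_prod_eq_pow_apply (of (omega k)) (m + 1) x y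
  rw [pow_succ_eq_smul_of_mul_self_eq_smul (omega_mul_omega k)] at hpath
  simp only [of_apply, Matrix.smul_apply, smul_eq_mul] at hpath
  simp_rw [prod_range_natCast_eq_prod_castSucc_succ]
  rw [hpath, Nat.add_sub_cancel]
  field_simp

/-- Conditional expectation of `∏_{i=1}^l ω(σ_{i-1}, σ_i)` given the endpoints
`σ_0 = x`, `σ_l = y`, where the interior coordinates are i.i.d. uniform on `[k]`,
equals `ω(x,y)`. -/
theorem path_omega_conditional_expectation (k l : ℕ) (hk : 1 ≤ k) (hl : 1 ≤ l)
    (x y : Fin k) :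
    (1 / (k : ℝ) ^ (l - 1)) *
      ∑ σ ∈ Finset.univ.filter
          (fun σ : Fin (l + 1) → Fin k => σ 0 = x ∧ σ (Fin.last l) = y),
        ∏ i ∈ Finset.range l, omega k (σ ↑i) (σ ↑(i + 1))
      = omega k x y :=
  path_omega_conditional_expectation_general k l hl x y
end

section
/- Let {f_α : α ∈ Λ} be an orthonormal family in L²(Q) with f_0 = 1, and suppose A := ∑_{α ∈ Λ} (E_{P'}[f_α])² < ∞ (note E_{P'}[f_0] = 1). For M ≥ 1, let Q̄ = Q^{⊗M} and P̄ = (1/M)∑_{i=1}^M P_i where P_i equals P' in coordinate i and Q elsewhere. For a tuple (α_1, ..., α_M) ∈ Λ^M, the expectation E_{P̄}[∏_{i=1}^M f_{α_i}(Y_i)] equals 1 if all α_i = 0; equals (1/M) E_{P'}[f_{α_j}] if exactly one index j has α_j ≠ 0; and equals 0 otherwise. Consequently, ∑ over all tuples of (E_{P̄}[∏_i f_{α_i}(Y_i)])² ≤ 1 + A/M. -/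
open MeasureTheory
open scoped ENNReal

instance iteSigmaFinite {Ω : Type*} [MeasurableSpace Ω] (P Q : Measure Ω)
    [SigmaFinite P] [SigmaFinite Q] (p : Prop) [Decidable p] :
    SigmaFinite (if p then P else Q) := by
  split <;> infer_instance

/-- The hidden informative sample mixture `P̄ = (1/M) ∑_i P_i`, where `P_i` equals `P'`
in coordinate `i` and `Q` elsewhere. -/
noncomputable def Pbar {Ω : Type*} [MeasurableSpace Ω] (Q P' : Measure Ω)
    [SigmaFinite Q] [SigmaFinite P'] (M : ℕ) : Measure (Fin M → Ω) :=
  (M : ℝ≥0∞)⁻¹ • ∑ i : Fin M, Measure.pi fun j : Fin M => if j = i then P' else Q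


/-!
Under `P_i` the coordinates are independent, so `E_{P_i}[∏_j f_{α_j}(Y_j)]` factorises, and every
coordinate `j ≠ i` contributes `E_Q[f_{α_j}] = ⟨f_{α_j}, f_{α₀}⟩_Q = [α_j = α₀]`. Hence only the
components `P_i` with `α_j = α₀` for all `j ≠ i` see the tuple, and the moment under `P̄` is
`M⁻¹ ∑_i [α = α₀ off i] · E_{P'}[f_{α_i}]`. The tuples with a nonzero moment are therefore the
constant tuple `α₀` (moment `1`) and, for each coordinate `i` and each `β ≠ α₀`, the tuple that is
`β` at `i` and `α₀` elsewhere (moment `E_{P'}[f_β] / M`); summing the squares gives exactly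
`1 + (A - 1) / M`.
-/

open Finset

section Combinatorics

variable {ι Λ : Type*}

theorem not_forall_ne_eq_of_ne {α₀ : Λ} {αv : ι → Λ} {i j : ι} (hj : αv j ≠ α₀) (hij : i ≠ j) :
    ¬∀ k ≠ i, αv k = α₀ :=
  fun h => hj (h j hij.symm)

theorem not_forall_ne_eq_of_two_ne {α₀ : Λ} {αv : ι → Λ} {i j : ι} (hij : i ≠ j)
    (hi : αv i ≠ α₀) (hj : αv j ≠ α₀) (k : ι) : ¬∀ l ≠ k, αv l = α₀ := by
  by_cases hki : k = i
  · exact not_forall_ne_eq_of_ne hj (hki ▸ hij)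
  · exact not_forall_ne_eq_of_ne hi hki

variable [Fintype ι] [DecidableEq ι] [DecidableEq Λ]

theorem prod_ite_eq_ite_forall_ne (i : ι) (x : ℝ) (p : ι → Prop) [DecidablePred p] :
    ∏ j, (if j = i then x else if p j then 1 else 0) = if ∀ j ≠ i, p j then x else 0 := by
  split_ifs with h
  · rw [prod_eq_single i (fun j _ hj => by simp [hj, h j hj]) (by simp)]
    simp
  · push Not at h
    obtain ⟨j, hji, hj⟩ := h
    exact prod_eq_zero (mem_univ j) (by simp [hji, hj])

theorem sum_ite_forall_ne_eq [Fintype Λ] (i : ι) (α₀ : Λ) (h : Λ → ℝ) :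
    ∑ αv : ι → Λ, (if ∀ j ≠ i, αv j = α₀ then h (αv i) else 0) = ∑ β, h β := by
  rw [← (Equiv.funSplitAt i Λ).symm.sum_comp, Fintype.sum_prod_type]
  refine sum_congr rfl fun β _ => ?_
  have hsplit : ∀ r : {j // j ≠ i} → Λ,
      (∀ j ≠ i, (Equiv.funSplitAt i Λ).symm (β, r) j = α₀) ↔ r = fun _ => α₀ := by
    simp +contextual [funext_iff]
  simp_rw [hsplit]
  simp

/-- With `a α = E_{P'}[f_α]` and `ι = Fin M`, this is `E_{P̄}[∏_i f_{α_i}(Y_i)]`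
(see `integral_prod_Pbar`). -/
noncomputable def mixtureMoment (a : Λ → ℝ) (α₀ : Λ) (αv : ι → Λ) : ℝ :=
  (Fintype.card ι : ℝ)⁻¹ * ∑ i, if ∀ j ≠ i, αv j = α₀ then a (αv i) else 0

variable {a : Λ → ℝ} {α₀ : Λ} {αv : ι → Λ} {i j : ι}

theorem mixtureMoment_of_forall_eq [Nonempty ι] (ha : a α₀ = 1) (h : ∀ i, αv i = α₀) :
    mixtureMoment a α₀ αv = 1 := by
  simp [mixtureMoment, h, ha]

theorem mixtureMoment_of_ne_of_forall_eq (hj : αv j ≠ α₀) (h : ∀ i ≠ j, αv i = α₀) :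
    mixtureMoment a α₀ αv = (Fintype.card ι : ℝ)⁻¹ * a (αv j) := by
  rw [mixtureMoment, sum_eq_single j (fun i _ hij => if_neg (not_forall_ne_eq_of_ne hj hij))
    (by simp), if_pos h]

theorem mixtureMoment_of_two_ne (hij : i ≠ j) (hi : αv i ≠ α₀) (hj : αv j ≠ α₀) :
    mixtureMoment a α₀ αv = 0 :=
  mul_eq_zero_of_right _
    (sum_eq_zero fun k _ => if_neg (not_forall_ne_eq_of_two_ne hij hi hj k))

theorem sq_mixtureMoment [Nonempty ι] (ha : a α₀ = 1) :
    mixtureMoment a α₀ αv ^ 2 = (if αv = fun _ => α₀ then 1 else 0) +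
      ∑ i, if ∀ j ≠ i, αv j = α₀ then
        (if αv i = α₀ then 0 else ((Fintype.card ι : ℝ)⁻¹ * a (αv i)) ^ 2) else 0 := by
  by_cases htwo : ∃ i j, i ≠ j ∧ αv i ≠ α₀ ∧ αv j ≠ α₀
  · obtain ⟨i, j, hij, hi, hj⟩ := htwo
    rw [mixtureMoment_of_two_ne hij hi hj, if_neg fun h => hi (congrFun h i),
      sum_eq_zero fun k _ => if_neg (not_forall_ne_eq_of_two_ne hij hi hj k)]
    simp
  push Not at htwo
  by_cases hone : ∃ j, αv j ≠ α₀
  · obtain ⟨j, hj⟩ := hone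
    have hrest : ∀ i ≠ j, αv i = α₀ := fun i hi => htwo j i (Ne.symm hi) hj
    rw [mixtureMoment_of_ne_of_forall_eq hj hrest, if_neg fun h => hj (congrFun h j),
      sum_eq_single j (fun i _ hij => if_neg (not_forall_ne_eq_of_ne hj hij)) (by simp),
      if_pos hrest, if_neg hj, zero_add]
  · push Not at hone
    rw [mixtureMoment_of_forall_eq ha hone, if_pos (funext hone)]
    simp [hone]

theorem sum_sq_mixtureMoment [Fintype Λ] [Nonempty ι] (ha : a α₀ = 1) :
    ∑ αv : ι → Λ, mixtureMoment a α₀ αv ^ 2 =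
      1 + (∑ β ∈ univ.erase α₀, a β ^ 2) / Fintype.card ι := by
  simp_rw [sq_mixtureMoment ha, sum_add_distrib, sum_ite_eq', mem_univ, if_true]
  rw [sum_comm, Fintype.sum_congr _ _ fun i => sum_ite_forall_ne_eq i α₀
    fun β => if β = α₀ then 0 else ((Fintype.card ι : ℝ)⁻¹ * a β) ^ 2]
  rw [sum_const, card_univ, sum_ite, sum_const_zero, zero_add, filter_ne', nsmul_eq_mul]
  simp_rw [mul_pow, ← mul_sum]
  field_simp

end Combinatorics

section Mixture

variable {Ω : Type*} [MeasurableSpace Ω] {Q P' : Measure Ω} [SigmaFinite Q] [SigmaFinite P']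
  {M : ℕ}

theorem integral_Pbar {g : (Fin M → Ω) → ℝ}
    (hg : ∀ i, Integrable g (Measure.pi fun j => if j = i then P' else Q)) :
    ∫ y, g y ∂(Pbar Q P' M) =
      (M : ℝ)⁻¹ * ∑ i, ∫ y, g y ∂(Measure.pi fun j => if j = i then P' else Q) := by
  rw [Pbar, integral_smul_measure, integral_finsetSum_measure fun i _ => hg i, smul_eq_mul,
    ENNReal.toReal_inv, ENNReal.toReal_natCast]

theorem integral_prod_Pbar {Λ : Type*} [DecidableEq Λ] {f : Λ → Ω → ℝ} {α₀ : Λ}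
    (hQ : ∀ α, ∫ ω, f α ω ∂Q = if α = α₀ then 1 else 0)
    (hIntP : ∀ α, Integrable (f α) P') (hIntQ : ∀ α, Integrable (f α) Q) (αv : Fin M → Λ) :
    ∫ y, (∏ i, f (αv i) (y i)) ∂(Pbar Q P' M) =
      mixtureMoment (fun α => ∫ ω, f α ω ∂P') α₀ αv := by
  have hInt : ∀ i j, Integrable (f (αv j)) (if j = i then P' else Q) := fun i j => by
    split_ifs
    exacts [hIntP _, hIntQ _]
  rw [integral_Pbar fun i => Integrable.fintype_prod (hInt i), mixtureMoment, Fintype.card_fin]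
  congr 1
  refine sum_congr rfl fun i _ => ?_
  rw [integral_fintype_prod_eq_prod, ← prod_ite_eq_ite_forall_ne]
  refine prod_congr rfl fun j _ => ?_
  by_cases hji : j = i
  · rw [if_pos hji, if_pos hji, hji]
  · rw [if_neg hji, if_neg hji, hQ]

end Mixture

theorem hidden_sample_moments_general {Ω Λ : Type*} [MeasurableSpace Ω]
    [Fintype Λ] [DecidableEq Λ]
    (Q P' : Measure Ω) [IsProbabilityMeasure Q] [IsProbabilityMeasure P']
    (f : Λ → Ω → ℝ) (α₀ : Λ) (hf0 : ∀ ω, f α₀ ω = 1)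
    (horth : ∀ α β, ∫ ω, f α ω * f β ω ∂Q = if α = β then 1 else 0)
    (hIntP : ∀ α, Integrable (f α) P')
    (hIntQ : ∀ α, Integrable (f α) Q)
    (M : ℕ) (hM : 0 < M) :
    (∀ αv : Fin M → Λ,
      ((∀ i, αv i = α₀) →
        ∫ y, (∏ i, f (αv i) (y i)) ∂(Pbar Q P' M) = 1) ∧
      (∀ j, αv j ≠ α₀ → (∀ i, i ≠ j → αv i = α₀) →
        ∫ y, (∏ i, f (αv i) (y i)) ∂(Pbar Q P' M)
          = (1 / (M : ℝ)) * ∫ ω, f (αv j) ω ∂P') ∧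
      ((∃ i j, i ≠ j ∧ αv i ≠ α₀ ∧ αv j ≠ α₀) →
        ∫ y, (∏ i, f (αv i) (y i)) ∂(Pbar Q P' M) = 0)) ∧
    (∑ αv : Fin M → Λ, (∫ y, (∏ i, f (αv i) (y i)) ∂(Pbar Q P' M)) ^ 2
        ≤ 1 + (∑ α, (∫ ω, f α ω ∂P') ^ 2) / (M : ℝ)) := by
  have hQ : ∀ α, ∫ ω, f α ω ∂Q = if α = α₀ then 1 else 0 := fun α => by
    simpa [hf0] using horth α α₀
  have : Nonempty (Fin M) := ⟨⟨0, hM⟩⟩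
  simp only [integral_prod_Pbar hQ hIntP hIntQ]
  set a : Λ → ℝ := fun α => ∫ ω, f α ω ∂P'
  have ha₀ : a α₀ = 1 := by simp [a, hf0]
  refine ⟨fun αv => ⟨mixtureMoment_of_forall_eq ha₀, fun j hj hrest => ?_,
    fun ⟨i, j, hij, hi, hj⟩ => mixtureMoment_of_two_ne hij hi hj⟩, ?_⟩
  · rw [mixtureMoment_of_ne_of_forall_eq hj hrest, Fintype.card_fin, one_div]
  · rw [sum_sq_mixtureMoment ha₀, Fintype.card_fin]
    gcongr
    exact erase_subset _ _

/-- Moments of products of orthonormal basis functions under the hidden informative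
sample mixture: `E_{P̄}[∏_i f_{α_i}(Y_i)]` equals `1` if all `α_i = α₀`; equals
`(1/M) E_{P'}[f_{α_j}]` if exactly one index `j` has `α_j ≠ α₀`; and equals `0`
otherwise. Consequently the sum of squared moments is at most `1 + A/M` with
`A = ∑_α (E_{P'}[f_α])²`. -/
theorem hidden_sample_moments {Ω Λ : Type*} [MeasurableSpace Ω]
    [Fintype Λ] [DecidableEq Λ]
    (Q P' : Measure Ω) [IsProbabilityMeasure Q] [IsProbabilityMeasure P']
    (hac : P' ≪ Q)
    (f : Λ → Ω → ℝ) (α₀ : Λ) (hf0 : ∀ ω, f α₀ ω = 1)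
    (horth : ∀ α β, ∫ ω, f α ω * f β ω ∂Q = if α = β then 1 else 0)
    (hIntP : ∀ α, Integrable (f α) P')
    (hIntQ : ∀ α, Integrable (f α) Q)
    (hIntQ2 : ∀ α β, Integrable (fun ω => f α ω * f β ω) Q)
    (M : ℕ) (hM : 0 < M) :
    (∀ αv : Fin M → Λ,
      ((∀ i, αv i = α₀) →
        ∫ y, (∏ i, f (αv i) (y i)) ∂(Pbar Q P' M) = 1) ∧
      (∀ j, αv j ≠ α₀ → (∀ i, i ≠ j → αv i = α₀) →
        ∫ y, (∏ i, f (αv i) (y i)) ∂(Pbar Q P' M)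
          = (1 / (M : ℝ)) * ∫ ω, f (αv j) ω ∂P') ∧
      ((∃ i j, i ≠ j ∧ αv i ≠ α₀ ∧ αv j ≠ α₀) →
        ∫ y, (∏ i, f (αv i) (y i)) ∂(Pbar Q P' M) = 0)) ∧
    (∑ αv : Fin M → Λ, (∫ y, (∏ i, f (αv i) (y i)) ∂(Pbar Q P' M)) ^ 2
        ≤ 1 + (∑ α, (∫ ω, f α ω ∂P') ^ 2) / (M : ℝ)) :=
  hidden_sample_moments_general Q P' f α₀ hf0 horth hIntP hIntQ M hM
end
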